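/- Let b ∈ ℂ and let T be the 2×2 complex matrix with rows (1, b) and (0, −1), acting on ℓ_p². Then the numerical radius satisfies v_p(T) ≤ 1 + |b|·(1/p)^{1/p}·(1/q)^{1/q}; equivalently, every λ ∈ V_p(T) satisfies |λ| ≤ 1 + |b|·(1/p)^{1/p}·(1/q)^{1/q}. -/

import Mathlib

/-!
Writing `a = |x₁|`, `c = |x₂|` with `a ^ p + c ^ p = 1`, an element of the numerical range is
`a ^ p - c ^ p + b x₂ conj(x₁) a ^ (p - 2)`, whose modulus is at most `1 + |b| c a ^ (p - 1)`.
With `u = c ^ p`, `v = a ^ p` the product `c a ^ (p - 1) = u ^ (1/p) v ^ (1/q)` is maximized on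
`u + v = 1` at `u = 1/p`, `v = 1/q`; that this is the maximum is weighted AM-GM applied to
`p u` and `q v`.
-/

open Complex Real

/-- The `ℓ_p` norm on `ℂ²`. -/
noncomputable def lpNorm (p : ℝ) (x : Fin 2 → ℂ) : ℝ :=
  (∑ k, ‖x k‖ ^ p) ^ (1 / p)

/-- The numerical range of a `2 × 2` complex matrix acting on `ℓ_p²`.
Note that when `x k = 0` the corresponding term vanishes since `conj (x k) = 0`. -/
noncomputable def numRange (p : ℝ) (T : Matrix (Fin 2) (Fin 2) ℂ) : Set ℂ :=
  { z | ∃ x : Fin 2 → ℂ, lpNorm p x = 1 ∧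
      z = ∑ k, T.mulVec x k * (starRingEnd ℂ) (x k) * ((‖x k‖ ^ (p - 2) : ℝ) : ℂ) }

/-- The numerical radius of a `2 × 2` complex matrix acting on `ℓ_p²`. -/
noncomputable def numRadius (p : ℝ) (T : Matrix (Fin 2) (Fin 2) ℂ) : ℝ :=
  sSup ((fun z : ℂ => ‖z‖) '' numRange p T)

open scoped ComplexConjugate

theorem rpow_one_div_mul_rpow_one_div_le_of_add_eq_one {p q u v : ℝ} (hpq : p.HolderConjugate q)
    (hu : 0 ≤ u) (hv : 0 ≤ v) (huv : u + v = 1) :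
    u ^ (1 / p) * v ^ (1 / q) ≤ (1 / p) ^ (1 / p) * (1 / q) ^ (1 / q) := by
  have hp := hpq.pos
  have hq := hpq.symm.pos
  have hpu : 1 / p * (p * u) = u := by field_simp
  have hqv : 1 / q * (q * v) = v := by field_simp
  have amgm : (p * u) ^ (1 / p) * (q * v) ^ (1 / q) ≤ 1 := by
    have := geom_mean_le_arith_mean2_weighted (one_div_nonneg.2 hp.le) (one_div_nonneg.2 hq.le)
      (by positivity : 0 ≤ p * u) (by positivity : 0 ≤ q * v)
      (by simpa only [one_div] using hpq.inv_add_inv_eq_one)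
    rwa [hpu, hqv, huv] at this
  calc u ^ (1 / p) * v ^ (1 / q)
      = (1 / p * (p * u)) ^ (1 / p) * (1 / q * (q * v)) ^ (1 / q) := by
        rw [hpu, hqv]
    _ = (1 / p) ^ (1 / p) * (1 / q) ^ (1 / q) * ((p * u) ^ (1 / p) * (q * v) ^ (1 / q)) := by
        rw [mul_rpow (one_div_nonneg.2 hp.le) (mul_nonneg hp.le hu),
          mul_rpow (one_div_nonneg.2 hq.le) (mul_nonneg hq.le hv)]
        ring
    _ ≤ (1 / p) ^ (1 / p) * (1 / q) ^ (1 / q) := by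
        exact mul_le_of_le_one_right (by positivity) amgm

theorem mul_rpow_sub_one_le_of_rpow_add_rpow_eq_one {p q a c : ℝ} (hpq : p.HolderConjugate q)
    (ha : 0 ≤ a) (hc : 0 ≤ c) (hac : a ^ p + c ^ p = 1) :
    c * a ^ (p - 1) ≤ (1 / p) ^ (1 / p) * (1 / q) ^ (1 / q) := by
  have hc_eq : c = (c ^ p) ^ (1 / p) := by rw [one_div, rpow_rpow_inv hc hpq.ne_zero]
  have ha_eq : a ^ (p - 1) = (a ^ p) ^ (1 / q) := by
    rw [← rpow_mul ha, mul_one_div, hpq.div_conj_eq_sub_one]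
  rw [hc_eq, ha_eq]
  exact rpow_one_div_mul_rpow_one_div_le_of_add_eq_one hpq (by positivity) (by positivity)
    (by rwa [add_comm])

theorem lpNorm_eq_one_iff {p : ℝ} (hp : p ≠ 0) (x : Fin 2 → ℂ) :
    lpNorm p x = 1 ↔ ‖x 0‖ ^ p + ‖x 1‖ ^ p = 1 := by
  rw [lpNorm, Fin.sum_univ_two, one_div, rpow_inv_eq (by positivity) zero_le_one hp, one_rpow]

theorem mul_conj_mul_norm_rpow_sub_two {p : ℝ} (hp : p ≠ 0) (z : ℂ) :
    z * conj z * ((‖z‖ ^ (p - 2) : ℝ) : ℂ) = ((‖z‖ ^ p : ℝ) : ℂ) := by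
  rcases eq_or_ne z 0 with rfl | hz
  · simp [zero_rpow hp]
  · rw [mul_conj', ← ofReal_pow, ← ofReal_mul, ← rpow_natCast, ← rpow_add (norm_pos_iff.2 hz)]
    norm_num

theorem norm_conj_mul_norm_rpow_sub_two {p : ℝ} (hp : p ≠ 1) (z : ℂ) :
    ‖conj z * ((‖z‖ ^ (p - 2) : ℝ) : ℂ)‖ = ‖z‖ ^ (p - 1) := by
  rcases eq_or_ne z 0 with rfl | hz
  · simp [zero_rpow (sub_ne_zero.2 hp)]
  · rw [norm_mul, norm_conj, norm_real, norm_of_nonneg (by positivity), mul_comm,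
      ← rpow_add_one (norm_ne_zero_iff.2 hz)]
    ring_nf

theorem numRange_triangular {p : ℝ} (hp₀ : p ≠ 0) (b : ℂ) :
    numRange p !![1, b; 0, -1] = { z | ∃ x : Fin 2 → ℂ, ‖x 0‖ ^ p + ‖x 1‖ ^ p = 1 ∧
      z = ((‖x 0‖ ^ p - ‖x 1‖ ^ p : ℝ) : ℂ) +
        b * x 1 * (conj (x 0) * ((‖x 0‖ ^ (p - 2) : ℝ) : ℂ)) } := by
  ext z
  refine exists_congr fun x => and_congr (lpNorm_eq_one_iff hp₀ x) (Eq.congr_right ?_)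
  rw [ofReal_sub, ← mul_conj_mul_norm_rpow_sub_two hp₀ (x 0),
    ← mul_conj_mul_norm_rpow_sub_two hp₀ (x 1)]
  simp only [Fin.sum_univ_two, Matrix.mulVec, dotProduct, Matrix.of_apply, Matrix.cons_val',
    Matrix.cons_val_zero, Matrix.cons_val_one, Matrix.cons_val_fin_one, Matrix.empty_val']
  ring

theorem norm_le_of_mem_numRange_triangular {p q : ℝ} (hpq : p.HolderConjugate q) (b : ℂ) :
    ∀ lam ∈ numRange p !![1, b; 0, -1],
      ‖lam‖ ≤ 1 + ‖b‖ * ((1 / p) ^ (1 / p) * (1 / q) ^ (1 / q)) := by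
  rw [numRange_triangular hpq.ne_zero]
  rintro _ ⟨x, hx, rfl⟩
  have hdiff : |‖x 0‖ ^ p - ‖x 1‖ ^ p| ≤ 1 :=
    abs_sub_le_of_nonneg_of_le (by positivity) (by linarith [rpow_nonneg (norm_nonneg (x 1)) p])
      (by positivity) (by linarith [rpow_nonneg (norm_nonneg (x 0)) p])
  have hcross := mul_rpow_sub_one_le_of_rpow_add_rpow_eq_one hpq (norm_nonneg _) (norm_nonneg _) hx
  calc _ ≤ |‖x 0‖ ^ p - ‖x 1‖ ^ p| + ‖b‖ * (‖x 1‖ * ‖x 0‖ ^ (p - 1)) := by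
        grw [norm_add_le, norm_real, norm_mul, norm_mul,
          norm_conj_mul_norm_rpow_sub_two hpq.lt.ne', Real.norm_eq_abs, mul_assoc]
    _ ≤ 1 + ‖b‖ * ((1 / p) ^ (1 / p) * (1 / q) ^ (1 / q)) := by gcongr

theorem numRadius_upper_bound (p q : ℝ) (hp : 1 < p) (hq : q = p / (p - 1)) (b : ℂ) :
    numRadius p !![1, b; 0, -1] ≤ 1 + ‖b‖ * ((1 / p) ^ (1 / p) * (1 / q) ^ (1 / q)) ∧
    ∀ lam ∈ numRange p !![1, b; 0, -1],
      ‖lam‖ ≤ 1 + ‖b‖ * ((1 / p) ^ (1 / p) * (1 / q) ^ (1 / q)) := by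
  have hpq : p.HolderConjugate q := hq ▸ .conjExponent hp
  have bound := norm_le_of_mem_numRange_triangular hpq b
  refine ⟨Real.sSup_le ?_ ?_, bound⟩
  · rintro _ ⟨lam, hlam, rfl⟩
    exact bound lam hlam
  · have := hpq.pos
    have := hpq.symm.pos
    positivity
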